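/- Let H be a nonempty set of vertices of a ℤⁿ-quiver Q with P(H) = H. Let μ := α_m⋯α₁ be a composition of paths α₁,…,α_m. For i = 1,…,m let v_i be the initial vertex of α_i, and let v_{m+1} be the final vertex of α_m. For i = 1,…,m+1 let w_i be the shadow of v_i in H and γ_i an admissible path from w_i to v_i; for i = 1,…,m let ρ_i be an admissible path from w_i to w_{i+1}, and set ρ := ρ_m⋯ρ₁. Then the length of μγ₁ is at least the length of γ_{m+1}ρ, with equality if and only if α_iγ_i is admissible for each i = 1,…,m. In particular: if μγ₁ is admissible then equality holds and ρ is admissible; conversely, if ρ is admissible and equality holds, then μγ₁ is admissible. -/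
import Mathlib


/- Background definitions: ℤⁿ-quivers, linked nets, and associated notions,
following Esteves–Santos–Vital, "Quiver representations arising from
degenerations of linear series, II". -/

open CategoryTheory CategoryTheory.Limits

namespace LNet
universe w

section QuiverDefs

variable {V : Type*} [Quiver.{w+1} V] {n : ℕ}

/-- The number of arrows of type `t` occurring in the path `p`. -/
def typeCount (τ : ∀ {a b : V}, (a ⟶ b) → Fin (n + 1)) :
    ∀ {a b : V}, Quiver.Path a b → Fin (n + 1) → ℕ
  | _, _, Quiver.Path.nil, _ => 0
  | _, _, Quiver.Path.cons p e, t => typeCount τ p t + (if τ e = t then 1 else 0)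

variable (τ : ∀ {a b : V}, (a ⟶ b) → Fin (n + 1))

/-- A path is admissible if it contains no arrow of at least one arrow type. -/
def Admissible {a b : V} (p : Quiver.Path a b) : Prop :=
  ∃ t : Fin (n + 1), typeCount τ p t = 0

/-- A path is simple if it contains at most one arrow of each type. -/
def SimplePath {a b : V} (p : Quiver.Path a b) : Prop :=
  ∀ t : Fin (n + 1), typeCount τ p t ≤ 1

/-- Two paths with the same source have no arrow type in common. -/
def NoCommonType {a b c : V} (p : Quiver.Path a b) (q : Quiver.Path a c) : Prop :=
  ∀ t : Fin (n + 1), ¬(typeCount τ p t ≠ 0 ∧ typeCount τ q t ≠ 0)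

/-- The quiver is a `ℤⁿ`-quiver with respect to the partition of its arrow set
into the `n + 1` types given by `τ`. -/
structure IsZnQuiver : Prop where
  uniqArrow : ∀ (a : V) (t : Fin (n + 1)), ∃! e : Σ b : V, a ⟶ b, τ e.2 = t
  connAdm : ∀ a b : V, ∃ p : Quiver.Path a b, Admissible τ p
  targetEq : ∀ {a b c : V} (p : Quiver.Path a b) (q : Quiver.Path a c),
      b = c ↔ ∃ d : ℤ, ∀ t : Fin (n + 1),
        (typeCount τ p t : ℤ) - (typeCount τ q t : ℤ) = d

/-- `b = I · a`: there is a simple path from `a` to `b` with essential type `I`. -/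
def StepBy (I : Set (Fin (n + 1))) (a b : V) : Prop :=
  ∃ p : Quiver.Path a b, SimplePath τ p ∧ ∀ t : Fin (n + 1), typeCount τ p t ≠ 0 ↔ t ∈ I

/-- Two distinct vertices connected by a simple path are neighbors. -/
def Neighbors (a b : V) : Prop :=
  a ≠ b ∧ ((∃ p : Quiver.Path a b, SimplePath τ p) ∨ (∃ p : Quiver.Path b a, SimplePath τ p))

/-- A polygon is a nonempty finite set of pairwise neighboring vertices. -/
def IsPolygon (Δ : Finset V) : Prop :=
  Δ.Nonempty ∧ ∀ u ∈ Δ, ∀ v ∈ Δ, u ≠ v → Neighbors τ u v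

/-- The hull of a set of vertices. -/
def hull (H : Set V) : Set V :=
  {v | ∀ t : Fin (n + 1), ∃ z ∈ H, ∃ p : Quiver.Path z v, typeCount τ p t = 0}

/-- `w` is the shadow of `v` in `H`: `w ∈ H` and each `z ∈ H` is connected to `v`
by an admissible path through `w`. -/
def IsShadow (H : Set V) (v w : V) : Prop :=
  w ∈ H ∧ ∀ z ∈ H, ∃ (p : Quiver.Path z w) (q : Quiver.Path w v), Admissible τ (p.comp q)

/-- `v` is a bridge of `v₁` and `v₂`: there are simple admissible paths from `v`
to `v₁` and to `v₂` with no arrow type in common. -/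
def IsBridge (v₁ v₂ v : V) : Prop :=
  ∃ (γ₁ : Quiver.Path v v₁) (γ₂ : Quiver.Path v v₂),
    SimplePath τ γ₁ ∧ Admissible τ γ₁ ∧ SimplePath τ γ₂ ∧ Admissible τ γ₂ ∧
      NoCommonType τ γ₁ γ₂

/-- Two distinct vertices are weakly neighbors if they admit a bridge. -/
def WeaklyNeighbors (v₁ v₂ : V) : Prop :=
  v₁ ≠ v₂ ∧ ∃ v : V, IsBridge τ v₁ v₂ v

/-- Composition of a chain of paths. -/
def chainComp (v : ℕ → V) (α : ∀ i : ℕ, Quiver.Path (v i) (v (i + 1))) :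
    ∀ m : ℕ, Quiver.Path (v 0) (v m)
  | 0 => Quiver.Path.nil
  | (m + 1) => (chainComp v α m).comp (α m)

end QuiverDefs

section AbelianDefs

variable {k : Type*} [Field k]
variable {V : Type*} [Quiver.{w+1} V] {n : ℕ}
variable {C : Type*} [Category C] [Abelian C] [Linear k C]

/-- The composition of the morphisms of `F` along a path. -/
def mapAlong (F : Prefunctor V C) : ∀ {a b : V}, Quiver.Path a b → (F.obj a ⟶ F.obj b)
  | _, _, Quiver.Path.nil => 𝟙 _
  | _, _, Quiver.Path.cons p e => mapAlong F p ≫ F.map e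

variable (k) (τ : ∀ {a b : V}, (a ⟶ b) → Fin (n + 1))

/-- A weakly linked net: maps along two paths with the same endpoints, the second
admissible, agree up to a scalar, and maps along minimal circuits vanish. -/
structure IsWeaklyLinkedNet (F : Prefunctor V C) : Prop where
  scalar : ∀ {a b : V} (γ₁ γ₂ : Quiver.Path a b), Admissible τ γ₂ →
    ∃ c : k, mapAlong F γ₁ = c • mapAlong F γ₂
  circuit : ∀ {a b : V} (γ : Quiver.Path a b), SimplePath τ γ → ¬ Admissible τ γ →
    mapAlong F γ = 0

/-- A linked net: a weakly linked net such that two admissible paths leaving the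
same vertex with no arrow type in common have trivially intersecting kernels. -/
def IsLinkedNet (F : Prefunctor V C) : Prop :=
  IsWeaklyLinkedNet k τ F ∧
    ∀ {a b c : V} (γ₁ : Quiver.Path a b) (γ₂ : Quiver.Path a c),
      Admissible τ γ₁ → Admissible τ γ₂ → NoCommonType τ γ₁ γ₂ →
      ∀ {T : C} (h : T ⟶ F.obj a),
        h ≫ mapAlong F γ₁ = 0 → h ≫ mapAlong F γ₂ = 0 → h = 0

variable {k}

/-- The class `φ^u_v` is zero. -/
def PhiZero (F : Prefunctor V C) (u v : V) : Prop :=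
  ∀ p : Quiver.Path u v, Admissible τ p → mapAlong F p = 0

/-- Two vertices are unrelated for the net if the classes `φ^u_v` and `φ^v_u` vanish. -/
def Unrelated (F : Prefunctor V C) (u v : V) : Prop :=
  PhiZero τ F u v ∧ PhiZero τ F v u

/-- The net is 1-generated by `H`. -/
def OneGenBy (F : Prefunctor V C) (H : Set V) : Prop :=
  ∀ v : V, ∃ u ∈ H, ∃ p : Quiver.Path u v, Epi (mapAlong F p)

/-- The net is generated by `H`. -/
def GeneratedBy (F : Prefunctor V C) (H : Set V) : Prop :=
  ∀ v : V, ∃ s : Finset ((u : V) × Quiver.Path u v),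
    (∀ x ∈ s, x.1 ∈ H) ∧ s.sup (fun x => imageSubobject (mapAlong F x.2)) = ⊤

/-- The net is finitely generated. -/
def FinitelyGenerated (F : Prefunctor V C) : Prop :=
  ∃ H : Set V, H.Finite ∧ GeneratedBy F H

/-- All objects of the net are simple objects. -/
def AllSimple (F : Prefunctor V C) : Prop := ∀ v : V, Simple (F.obj v)

/-- The net is locally finite. -/
def LocallyFinite (F : Prefunctor V C) : Prop :=
  ∀ v : V, ∃ ℓ : ℕ, ∀ (u : V) (p : Quiver.Path u v), ℓ < p.length → mapAlong F p = 0

/-- The net is pure: every epimorphism between associated objects is an isomorphism. -/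
def PureRep (F : Prefunctor V C) : Prop :=
  ∀ (u v : V) (f : F.obj u ⟶ F.obj v), Epi f → IsIso f

/-- The net is exact: `Im φ^{v₁}_{v₂} = Ker φ^{v₂}_{v₁}` for all neighbors. -/
def ExactRep (F : Prefunctor V C) : Prop :=
  ∀ u v : V, Neighbors τ u v → ∀ (p : Quiver.Path u v) (q : Quiver.Path v u),
    Admissible τ p → Admissible τ q →
      imageSubobject (mapAlong F p) = kernelSubobject (mapAlong F q)

/-- The representation `𝔳_H` assembled from a shadow function `sh` and maps `Gmap`. -/
def shadowPrefunctor (F : Prefunctor V C) (sh : V → V)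
    (Gmap : ∀ {a b : V}, (a ⟶ b) → (F.obj (sh a) ⟶ F.obj (sh b))) : Prefunctor V C where
  obj v := F.obj (sh v)
  map e := Gmap e

variable (k)

/-- `(sh, Gmap)` is the data of an `H`-shadow representation of `F`. -/
def IsShadowRep (H : Set V) (F : Prefunctor V C) (sh : V → V)
    (Gmap : ∀ {a b : V}, (a ⟶ b) → (F.obj (sh a) ⟶ F.obj (sh b))) : Prop :=
  (∀ v : V, IsShadow τ H v (sh v)) ∧
    ∀ {a b : V} (e : a ⟶ b),
      ((¬ ∃ (p : Quiver.Path (sh a) a) (q : Quiver.Path a b), Admissible τ (p.comp q)) →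
        Gmap e = 0) ∧
      ((∃ (p : Quiver.Path (sh a) a) (q : Quiver.Path a b), Admissible τ (p.comp q)) →
        ∃ (c : k) (ρ : Quiver.Path (sh a) (sh b)), c ≠ 0 ∧ Admissible τ ρ ∧
          Gmap e = c • mapAlong F ρ)

end AbelianDefs

section VectorDefs

variable {k : Type*} [Field k]
variable {V : Type*} [Quiver.{w+1} V] {n : ℕ}
variable {W : V → Type*} [∀ v, AddCommGroup (W v)] [∀ v, Module k (W v)]

/-- The composition of the linear maps of the representation along a path. -/
def mapAlongL (φ : ∀ {a b : V}, (a ⟶ b) → (W a →ₗ[k] W b)) :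
    ∀ {a b : V}, Quiver.Path a b → (W a →ₗ[k] W b)
  | _, _, Quiver.Path.nil => LinearMap.id
  | _, _, Quiver.Path.cons p e => (φ e).comp (mapAlongL φ p)

variable (k) (τ : ∀ {a b : V}, (a ⟶ b) → Fin (n + 1))
variable (φ : ∀ {a b : V}, (a ⟶ b) → (W a →ₗ[k] W b))

/-- A weakly linked net of vector spaces. -/
structure IsWeaklyLinkedNetL : Prop where
  scalar : ∀ {a b : V} (γ₁ γ₂ : Quiver.Path a b), Admissible τ γ₂ →
    ∃ c : k, mapAlongL φ γ₁ = c • mapAlongL φ γ₂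
  circuit : ∀ {a b : V} (γ : Quiver.Path a b), SimplePath τ γ → ¬ Admissible τ γ →
    mapAlongL φ γ = 0

/-- A linked net of vector spaces. -/
def IsLinkedNetL : Prop :=
  IsWeaklyLinkedNetL k τ φ ∧
    ∀ {a b c : V} (γ₁ : Quiver.Path a b) (γ₂ : Quiver.Path a c),
      Admissible τ γ₁ → Admissible τ γ₂ → NoCommonType τ γ₁ γ₂ →
      LinearMap.ker (mapAlongL φ γ₁) ⊓ LinearMap.ker (mapAlongL φ γ₂) = ⊥

/-- All spaces are nonzero of the same finite dimension. -/
def PureNontrivialL : Prop :=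
  (∀ v : V, 0 < Module.finrank k (W v)) ∧
    ∀ u v : V, Module.finrank k (W u) = Module.finrank k (W v)

/-- The net of vector spaces is 1-generated by `H`. -/
def OneGenL (H : Set V) : Prop :=
  ∀ v : V, ∃ u ∈ H, ∃ p : Quiver.Path u v, Function.Surjective (mapAlongL φ p)

/-- The net of vector spaces is generated by `H`. -/
def GeneratedL (H : Set V) : Prop :=
  ∀ v : V, ∃ s : Finset ((u : V) × Quiver.Path u v),
    (∀ x ∈ s, x.1 ∈ H) ∧ (⨆ x ∈ s, LinearMap.range (mapAlongL φ x.2)) = ⊤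

/-- The net of vector spaces is finitely generated. -/
def FinGenL : Prop := ∃ H : Set V, H.Finite ∧ GeneratedL k φ H

/-- A subrepresentation of pure dimension one: a point of `LP(𝔳)`. -/
def IsLP (L : ∀ v : V, Submodule k (W v)) : Prop :=
  (∀ v : V, Module.finrank k (L v) = 1) ∧
    ∀ (a b : V) (e : a ⟶ b), (L a).map (φ e) ≤ L b

/-- A point of `LP_H(𝔳)`: a tuple of one-dimensional subspaces indexed by `H` such
that the image of the subspace at `v` along any admissible path from `v` to `u`
is contained in the subspace at `u`, for all `v, u ∈ H`. -/
def IsLPH (H : Set V) (M : (v : V) → v ∈ H → Submodule k (W v)) : Prop :=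
  (∀ (v : V) (hv : v ∈ H), Module.finrank k (M v hv) = 1) ∧
    ∀ (v : V) (hv : v ∈ H) (u : V) (hu : u ∈ H) (p : Quiver.Path v u),
      Admissible τ p → (M v hv).map (mapAlongL φ p) ≤ M u hu

/-- The family `L` is generated by the vertex `v₀`. -/
def GenByVertexL (v₀ : V) (L : ∀ v : V, Submodule k (W v)) : Prop :=
  ∀ u : V, L u = ⨆ p : Quiver.Path v₀ u, (L v₀).map (mapAlongL φ p)

/-- The net of vector spaces is exact. -/
def ExactL : Prop :=
  ∀ u v : V, Neighbors τ u v → ∀ (p : Quiver.Path u v) (q : Quiver.Path v u),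
    Admissible τ p → Admissible τ q →
      LinearMap.range (mapAlongL φ p) = LinearMap.ker (mapAlongL φ q)

end VectorDefs


section Aux

variable {V : Type*} [Quiver.{w+1} V] {n : ℕ}
variable (τ : ∀ {a b : V}, (a ⟶ b) → Fin (n + 1))

lemma typeCount_comp {a b c : V} (p : Quiver.Path a b) (q : Quiver.Path b c)
    (t : Fin (n + 1)) :
    typeCount τ (p.comp q) t = typeCount τ p t + typeCount τ q t := by
  induction q with
  | nil => simp [typeCount, Quiver.Path.comp]
  | cons q e ih => simp [Quiver.Path.comp_cons, typeCount, ih]; omega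

lemma length_eq_sum {a b : V} (p : Quiver.Path a b) :
    p.length = ∑ t : Fin (n + 1), typeCount τ p t := by
  induction p with
  | nil => simp [typeCount]
  | cons p e ih =>
    simp [typeCount, Quiver.Path.length_cons, ih, Finset.sum_add_distrib]

lemma exists_shift (hZ : IsZnQuiver τ) {a b : V} (p q : Quiver.Path a b)
    (hq : Admissible τ q) :
    ∃ d : ℕ, ∀ t, typeCount τ p t = typeCount τ q t + d := by
  obtain ⟨d, hd⟩ := (hZ.targetEq p q).mp rfl
  obtain ⟨t0, ht0⟩ := hq
  refine ⟨typeCount τ p t0, fun t => ?_⟩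
  have h1 := hd t
  have h2 := hd t0
  rw [ht0] at h2
  omega

lemma counts_eq_of_adm (hZ : IsZnQuiver τ) {a b : V} (p q : Quiver.Path a b)
    (hp : Admissible τ p) (hq : Admissible τ q) :
    ∀ t, typeCount τ p t = typeCount τ q t := by
  obtain ⟨d, hd⟩ := exists_shift τ hZ p q hq
  obtain ⟨e, he⟩ := exists_shift τ hZ q p hp
  intro t
  have h1 := hd t
  have h2 := he t
  omega

lemma typeCount_chainComp (v : ℕ → V) (α : ∀ i : ℕ, Quiver.Path (v i) (v (i + 1)))
    (m : ℕ) (t : Fin (n + 1)) :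
    typeCount τ (chainComp v α m) t = ∑ i ∈ Finset.range m, typeCount τ (α i) t := by
  induction m with
  | zero => simp [chainComp, typeCount]
  | succ m ih => simp [chainComp, typeCount_comp, ih, Finset.sum_range_succ]

end Aux

/-- comparison of the lengths of `μγ₁` and `γ_{m+1}ρ`, where
`μ = α_m ⋯ α₁`, the `γ_i` are admissible paths from the shadows `w_i` of the
intermediate vertices `v_i`, and the `ρ_i` are admissible paths between
consecutive shadows. Here `v i`, `α i`, `w i`, `γ i`, `ρ i` for `i = 0, …`
correspond to `v_{i+1}`, `α_{i+1}`, `w_{i+1}`, `γ_{i+1}`, `ρ_{i+1}` in the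
paper, and `μγ₁ = (γ 0).comp (chainComp v α m)`,
`γ_{m+1}ρ = (chainComp w ρ m).comp (γ m)`. -/
theorem statement_11
    {V : Type*} [Quiver.{w+1} V] {n : ℕ}
    (τ : ∀ {a b : V}, (a ⟶ b) → Fin (n + 1)) (hZ : IsZnQuiver τ)
    (H : Set V) (hne : H.Nonempty) (hhull : hull τ H = H)
    (m : ℕ) (hm : 1 ≤ m)
    (v : ℕ → V) (α : ∀ i : ℕ, Quiver.Path (v i) (v (i + 1)))
    (wv : ℕ → V) (hsh : ∀ i, i ≤ m → IsShadow τ H (v i) (wv i))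
    (γ : ∀ i : ℕ, Quiver.Path (wv i) (v i)) (hγ : ∀ i, i ≤ m → Admissible τ (γ i))
    (ρ : ∀ i : ℕ, Quiver.Path (wv i) (wv (i + 1))) (hρ : ∀ i, i < m → Admissible τ (ρ i)) :
    (((chainComp wv ρ m).comp (γ m)).length ≤ ((γ 0).comp (chainComp v α m)).length) ∧
    (((γ 0).comp (chainComp v α m)).length = ((chainComp wv ρ m).comp (γ m)).length ↔
      ∀ i, i < m → Admissible τ ((γ i).comp (α i))) ∧
    (Admissible τ ((γ 0).comp (chainComp v α m)) →
      ((γ 0).comp (chainComp v α m)).length = ((chainComp wv ρ m).comp (γ m)).length ∧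
        Admissible τ (chainComp wv ρ m)) ∧
    (Admissible τ (chainComp wv ρ m) →
      ((γ 0).comp (chainComp v α m)).length = ((chainComp wv ρ m).comp (γ m)).length →
      Admissible τ ((γ 0).comp (chainComp v α m))) := by

  have hmem : ∀ i, i ≤ m → wv i ∈ H := fun i hi => (hsh i hi).1
  have adm_ργ : ∀ i, i < m → Admissible τ ((ρ i).comp (γ (i+1))) := by
    intro i hi
    obtain ⟨p, q, t0, ht0⟩ := (hsh (i+1) (by omega)).2 (wv i) (hmem i hi.le)
    have ht0' : typeCount τ (p.comp q) t0 = 0 := ht0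
    rw [typeCount_comp] at ht0'
    have hp : Admissible τ p := ⟨t0, show typeCount τ p t0 = 0 by omega⟩
    have hq : Admissible τ q := ⟨t0, show typeCount τ q t0 = 0 by omega⟩
    have h1 : typeCount τ (ρ i) t0 = typeCount τ p t0 :=
      counts_eq_of_adm τ hZ (ρ i) p (hρ i hi) hp t0
    have h2 : typeCount τ (γ (i+1)) t0 = typeCount τ q t0 :=
      counts_eq_of_adm τ hZ (γ (i+1)) q (hγ (i+1) (by omega)) hq t0
    refine ⟨t0, ?_⟩
    show typeCount τ ((ρ i).comp (γ (i+1))) t0 = 0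
    rw [typeCount_comp]
    omega
  have hkey : ∀ i, ∃ d : ℕ, i < m → ∀ t, typeCount τ ((γ i).comp (α i)) t
      = typeCount τ ((ρ i).comp (γ (i+1))) t + d := by
    intro i
    by_cases hi : i < m
    · obtain ⟨d, hd⟩ :=
        exists_shift τ hZ ((γ i).comp (α i)) ((ρ i).comp (γ (i+1))) (adm_ργ i hi)
      exact ⟨d, fun _ => hd⟩
    · exact ⟨0, fun h => absurd h hi⟩
  choose d hd using hkey
  have tele : ∀ t : Fin (n+1), ∀ k, k ≤ m →
      typeCount τ (γ 0) t + ∑ i ∈ Finset.range k, typeCount τ (α i) t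
      = ∑ i ∈ Finset.range k, typeCount τ (ρ i) t + typeCount τ (γ k) t
        + ∑ i ∈ Finset.range k, d i := by
    intro t k
    induction k with
    | zero => simp
    | succ k ih =>
      intro hk
      have h1 := ih (by omega)
      have h2 := hd k (by omega) t
      rw [typeCount_comp, typeCount_comp] at h2
      simp only [Finset.sum_range_succ]
      omega
  have main : ∀ t, typeCount τ ((γ 0).comp (chainComp v α m)) t
      = typeCount τ ((chainComp wv ρ m).comp (γ m)) t + ∑ i ∈ Finset.range m, d i := by
    intro t
    rw [typeCount_comp, typeCount_comp, typeCount_chainComp, typeCount_chainComp]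
    have := tele t m le_rfl
    omega
  have hlen : ((γ 0).comp (chainComp v α m)).length
      = ((chainComp wv ρ m).comp (γ m)).length + (n+1) * ∑ i ∈ Finset.range m, d i := by
    rw [length_eq_sum τ, length_eq_sum τ]
    rw [Finset.sum_congr rfl (fun t _ => main t), Finset.sum_add_distrib]
    simp [Finset.card_univ, mul_comm]
  have heqD : (((γ 0).comp (chainComp v α m)).length
      = ((chainComp wv ρ m).comp (γ m)).length) ↔ (∑ i ∈ Finset.range m, d i) = 0 := by
    rw [hlen, add_eq_left]
    simp [Nat.mul_eq_zero]
  have dzero : ∀ i, i < m → (d i = 0 ↔ Admissible τ ((γ i).comp (α i))) := by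
    intro i hi
    constructor
    · intro h0
      obtain ⟨t0, ht0⟩ := adm_ργ i hi
      have ht0' : typeCount τ ((ρ i).comp (γ (i+1))) t0 = 0 := ht0
      have h2 := hd i hi t0
      exact ⟨t0, show typeCount τ ((γ i).comp (α i)) t0 = 0 by omega⟩
    · intro hadm
      have h1 : typeCount τ ((γ i).comp (α i)) 0
          = typeCount τ ((ρ i).comp (γ (i+1))) 0 :=
        counts_eq_of_adm τ hZ ((γ i).comp (α i)) ((ρ i).comp (γ (i+1)))
          hadm (adm_ργ i hi) 0
      have h2 := hd i hi 0
      omega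
  have sumzero : (∑ i ∈ Finset.range m, d i) = 0 ↔ ∀ i, i < m → d i = 0 := by
    rw [Finset.sum_eq_zero_iff]
    constructor
    · intro h i hi; exact h i (Finset.mem_range.mpr hi)
    · intro h i hi; exact h i (Finset.mem_range.mp hi)
  refine ⟨Nat.le.intro hlen.symm, ?_, ?_, ?_⟩
  · rw [heqD, sumzero]
    exact ⟨fun h i hi => (dzero i hi).mp (h i hi),
      fun h i hi => (dzero i hi).mpr (h i hi)⟩
  · rintro ⟨t0, ht0⟩
    have ht0' : typeCount τ ((γ 0).comp (chainComp v α m)) t0 = 0 := ht0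
    have hm0 := main t0
    have hD0 : (∑ i ∈ Finset.range m, d i) = 0 := by omega
    refine ⟨heqD.mpr hD0, ?_⟩
    rw [typeCount_comp, typeCount_comp] at hm0
    rw [typeCount_comp] at ht0'
    exact ⟨t0, show typeCount τ (chainComp wv ρ m) t0 = 0 by omega⟩
  · intro hρadm heq
    have hD0 := heqD.mp heq
    obtain ⟨p, q, t0, ht0⟩ := (hsh m le_rfl).2 (wv 0) (hmem 0 (Nat.zero_le m))
    have ht0' : typeCount τ (p.comp q) t0 = 0 := ht0
    rw [typeCount_comp] at ht0'
    have hp : Admissible τ p := ⟨t0, show typeCount τ p t0 = 0 by omega⟩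
    have hq : Admissible τ q := ⟨t0, show typeCount τ q t0 = 0 by omega⟩
    have h1 : typeCount τ (chainComp wv ρ m) t0 = typeCount τ p t0 :=
      counts_eq_of_adm τ hZ (chainComp wv ρ m) p hρadm hp t0
    have h2 : typeCount τ (γ m) t0 = typeCount τ q t0 :=
      counts_eq_of_adm τ hZ (γ m) q (hγ m le_rfl) hq t0
    have hm0 := main t0
    rw [typeCount_comp, typeCount_comp] at hm0
    refine ⟨t0, ?_⟩
    show typeCount τ ((γ 0).comp (chainComp v α m)) t0 = 0
    rw [typeCount_comp]
    omega

end LNet
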